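/- arXiv:2105.00711 — 4 statements merged into one kernel-verified Lean document; each statement's English description precedes it below -/
import Mathlib

section
/- Let X and Z be disjoint finite sets, let Q be a partial order relation on Z, and let y be a point not contained in X ∪ Z. Then the cardinality of 𝔑*_{Q+A_y}(X, Z∪{y}) equals the cardinality of ℑ_{Q^d}(X, Z). Equivalently: the number of posets on X ∪ Z containing Q as an induced sub-poset equals the number of posets R on X ∪ Z ∪ {y} which contain Q^d + A_y as an induced sub-poset and in which the maximal points of Q^d + A_y are exactly the maximal points of R. -/
namespace Erne

variable {α : Type*}

/-- A partial order relation with carrier `X`: a reflexive, antisymmetric,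
transitive subset of `X × X`. -/
def IsPor (X : Set α) (R : Set (α × α)) : Prop :=
  R ⊆ X ×ˢ X ∧ (∀ x ∈ X, (x, x) ∈ R) ∧
    (∀ x y, (x, y) ∈ R → (y, x) ∈ R → x = y) ∧
    (∀ x y z, (x, y) ∈ R → (y, z) ∈ R → (x, z) ∈ R)

/-- The carrier of a p.o.r. (recovered from reflexivity). -/
def carrier (R : Set (α × α)) : Set α := {x | (x, x) ∈ R}

/-- The induced p.o.r. `R|_M = R ∩ (M × M)`. -/
def restrict (R : Set (α × α)) (M : Set α) : Set (α × α) := R ∩ M ×ˢ M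

/-- The dual `R^d`. -/
def dual (R : Set (α × α)) : Set (α × α) := {p | (p.2, p.1) ∈ R}

/-- `↑_R M`. -/
def upSet (R : Set (α × α)) (M : Set α) : Set α := {x | ∃ y ∈ M, (y, x) ∈ R}

/-- `↓_R M`. -/
def downSet (R : Set (α × α)) (M : Set α) : Set α := {x | ∃ y ∈ M, (x, y) ∈ R}

/-- `↑_R x`. -/
def up (R : Set (α × α)) (x : α) : Set α := {z | (x, z) ∈ R}

/-- `↓_R y`. -/
def down (R : Set (α × α)) (y : α) : Set α := {x | (x, y) ∈ R}

/-- `L` is a lower end of `R`. -/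
def IsLowerEnd (R : Set (α × α)) (L : Set α) : Prop :=
  ∀ x y, (x, y) ∈ R → y ∈ L → x ∈ L

/-- `U` is an upper end of `R`. -/
def IsUpperEnd (R : Set (α × α)) (U : Set α) : Prop :=
  ∀ x y, (x, y) ∈ R → x ∈ U → y ∈ U

/-- `M` is convex in `R`. -/
def IsConvex (R : Set (α × α)) (M : Set α) : Prop :=
  ∀ a b x, a ∈ M → b ∈ M → (a, x) ∈ R → (x, b) ∈ R → x ∈ M

/-- The set of maximal points of `R`: those `x` with `↑_R x = {x}`. -/
def maxPts (R : Set (α × α)) : Set α := {x | up R x = {x}}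

/-- `max M = max R|_M`. -/
def maxOf (R : Set (α × α)) (M : Set α) : Set α := maxPts (restrict R M)

/-- `γ_R(M) = ⋃_{(m,n) ∈ M×M} (↑_R m) ∩ (↓_R n)`, the convex hull of `M` in `R`. -/
def gamma (R : Set (α × α)) (M : Set α) : Set α :=
  {x | ∃ m ∈ M, ∃ n ∈ M, (m, x) ∈ R ∧ (x, n) ∈ R}

/-- The antichain (diagonal) `Δ_Y` on `Y`. -/
def diag (Y : Set α) : Set (α × α) := {p | p.1 = p.2 ∧ p.1 ∈ Y}

/-- `𝔘(X,Y)`: p.o.r.'s on `X ∪ Y` in which `Y` is an upper end. -/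
def Uset (X Y : Set α) : Set (Set (α × α)) :=
  {R | IsPor (X ∪ Y) R ∧ IsUpperEnd R Y}

/-- `ℭ_Q(X,Y)`: p.o.r.'s on `X ∪ Y` with `R|_Y = Q` convex in `R`. -/
def Cset (Q : Set (α × α)) (X Y : Set α) : Set (Set (α × α)) :=
  {R | IsPor (X ∪ Y) R ∧ restrict R Y = Q ∧ IsConvex R Y}

/-- `𝔐_Q(X,Y) = 𝔘(X,Y) ∩ ℭ_Q(X,Y)`. -/
def Mset (Q : Set (α × α)) (X Y : Set α) : Set (Set (α × α)) :=
  Uset X Y ∩ Cset Q X Y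

/-- `𝔐*_Q(X,Y)`: members of `ℭ_Q(X,Y)` with `max Q = max R`. -/
def MstarSet (Q : Set (α × α)) (X Y : Set α) : Set (Set (α × α)) :=
  {R ∈ Cset Q X Y | maxPts Q = maxPts R}

/-- `ℑ_Q(X,Y)`: p.o.r.'s on `X ∪ Y` with `R|_Y = Q`. -/
def Iset (Q : Set (α × α)) (X Y : Set α) : Set (Set (α × α)) :=
  {R | IsPor (X ∪ Y) R ∧ restrict R Y = Q}

/-- `𝔑*_Q(X,Y)`: members of `ℑ_Q(X,Y)` with `max Q = max R`. -/
def NstarSet (Q : Set (α × α)) (X Y : Set α) : Set (Set (α × α)) :=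
  {R ∈ Iset Q X Y | maxPts Q = maxPts R}

/-- `τ_{X,Y}(R) = (R|_X)^d ∪ ((X×Y) \ R) ∪ (R|_Y)^d`. -/
def tau (X Y : Set α) (R : Set (α × α)) : Set (α × α) :=
  dual (restrict R X) ∪ ((X ×ˢ Y) \ R) ∪ dual (restrict R Y)

/-- `𝒢_Q(M)`: members `G` of `ℑ_Q(M,Y)` with `γ_G(Y) = c(G)`. -/
def GsetM (Q : Set (α × α)) (Y M : Set α) : Set (Set (α × α)) :=
  {G ∈ Iset Q M Y | gamma G Y = carrier G}

/-- `𝔊_Q(X) = ⋃_{M ⊆ X} 𝒢_Q(M)`. -/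
def Gset (Q : Set (α × α)) (X Y : Set α) : Set (Set (α × α)) :=
  {G | ∃ M ⊆ X, G ∈ GsetM Q Y M}

/-- `ℒ(P)`: the lower ends of `P` (subsets of the carrier of `P`). -/
def lowerEnds (P : Set (α × α)) : Set (Set α) :=
  {L | L ⊆ carrier P ∧ IsLowerEnd P L}

/-- `ℋ_Q(Y, ℒ(P))`: mappings `f : Y → ℒ(P)` with `(a,b) ∈ Q → f a ⊆ f b`. -/
def Hset (Q P : Set (α × α)) (Y : Set α) : Set (↥Y → Set α) :=
  {f | (∀ y, f y ∈ lowerEnds P) ∧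
    ∀ a b : ↥Y, ((a : α), (b : α)) ∈ Q → f a ⊆ f b}

/-- `Φ(f) = P ∪ Q ∪ ⋃_{y ∈ Y} (f(y) × {y})` for `f ∈ ℋ_Q(Y, ℒ(P))`. -/
def Phi (Q : Set (α × α)) (Y : Set α) (P : Set (α × α)) (f : ↥Y → Set α) :
    Set (α × α) :=
  P ∪ Q ∪ {p | ∃ h : p.2 ∈ Y, p.1 ∈ f ⟨p.2, h⟩}

/-- `𝔉_Q(X,Y)`: pairs `(P, f)` with `P ∈ 𝔓(X)` and `f ∈ ℋ_Q(Y, ℒ(P))`;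
the first component encodes `S(f) = P`. -/
def Fset (Q : Set (α × α)) (X Y : Set α) :
    Set (Set (α × α) × (↥Y → Set α)) :=
  {pf | IsPor X pf.1 ∧ pf.2 ∈ Hset Q pf.1 Y}

/-- `𝔉*_Q(X,Y)`: those `f ∈ 𝔉_Q(X,Y)` with `X = ⋃_{y ∈ Y} f(y)`. -/
def FstarSet (Q : Set (α × α)) (X Y : Set α) :
    Set (Set (α × α) × (↥Y → Set α)) :=
  {pf ∈ Fset Q X Y | X = ⋃ y : ↥Y, pf.2 y}

/-- The transitive hull of `S`: the smallest transitive relation containing `S`. -/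
def transHull (S : Set (α × α)) : Set (α × α) :=
  {p | Relation.TransGen (fun a b => (a, b) ∈ S) p.1 p.2}

/-!
A poset `S` in `𝔑*_{Q+A_y}(X, Z ∪ {y})` is determined by its restriction `R` to `X ∪ Z` and
by the set `L` of points strictly below `y`: `L ⊆ X` is a lower end of `R`, and the condition on
maximal points says `max R \ L = max Q`. Applying `τ` to the partition `L, (X ∪ Z) \ L` turns `R`
into a poset `P` on `X ∪ Z` with `P|_Z = Q^d`, in which `L` is still a lower end, and `τ` is an
involution. The set `L` is recovered from `P` as `X \ ↑_P Z`: the minimal points of `↑_P Z` are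
those of `Z`, which gives the condition on maximal points, and in a finite poset every point of
`X \ L` lies below a maximal point of `R` outside `L`, hence below a point of `Z`.
-/

section Por

variable {W M N : Set α} {R : Set (α × α)} {u : α}

lemma IsPor.isPor_restrict (hR : IsPor W R) (hM : M ⊆ W) : IsPor M (restrict R M) :=
  ⟨fun _ hp => hp.2, fun x hx => ⟨hR.2.1 x (hM hx), hx, hx⟩,
    fun a b hab hba => hR.2.2.1 a b hab.1 hba.1,
    fun a b c hab hbc => ⟨hR.2.2.2 a b c hab.1 hbc.1, hab.2.1, hbc.2.2⟩⟩

lemma restrict_restrict (h : M ⊆ N) : restrict (restrict R N) M = restrict R M := by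
  ext ⟨a, b⟩
  exact ⟨fun ⟨⟨hab, _⟩, hM⟩ => ⟨hab, hM⟩, fun ⟨hab, ha, hb⟩ => ⟨⟨hab, h ha, h hb⟩, ha, hb⟩⟩

lemma dual_restrict : dual (restrict R M) = restrict (dual R) M := by
  ext ⟨a, b⟩
  exact ⟨fun ⟨hba, hb, ha⟩ => ⟨hba, ha, hb⟩, fun ⟨hba, ha, hb⟩ => ⟨hba, hb, ha⟩⟩

lemma mem_maxPts_iff : u ∈ maxPts R ↔ (u, u) ∈ R ∧ ∀ v, (u, v) ∈ R → v = u :=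
  Set.eq_singleton_iff_unique_mem

lemma maxPts_subset (hR : R ⊆ W ×ˢ W) : maxPts R ⊆ W :=
  fun _ hu => (hR (mem_maxPts_iff.1 hu).1).1

lemma IsPor.exists_rel_mem_maxPts (hW : W.Finite) (hR : IsPor W R) (hu : u ∈ W) :
    ∃ m ∈ maxPts R, (u, m) ∈ R := by
  have huu : (u, u) ∈ R := hR.2.1 u hu
  obtain ⟨m, hum, hmin⟩ := Set.Finite.exists_minimalFor (up R) (up R u)
    (hW.subset fun _ hv => (hR.1 hv).2) ⟨u, huu⟩
  refine ⟨m, mem_maxPts_iff.2 ⟨hR.2.1 m (hR.1 hum).2, fun v hmv => ?_⟩, hum⟩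
  have hvm : (v, m) ∈ R :=
    hmin (hR.2.2.2 u m v hum hmv) (fun w hvw => hR.2.2.2 m v w hmv hvw) (hR.2.1 m (hR.1 hum).2)
  exact hR.2.2.1 v m hvm hmv

lemma IsPor.maxOf_downSet (hR : IsPor W R) : maxOf R (downSet R M) = maxOf R M := by
  have hD : ∀ {v m}, m ∈ M → (v, m) ∈ R → v ∈ downSet R M := fun hm hvm => ⟨_, hm, hvm⟩
  have hrefl : ∀ {v w}, (v, w) ∈ R → (w, w) ∈ R := fun hvw => hR.2.1 _ (hR.1 hvw).2
  ext u
  simp only [maxOf, mem_maxPts_iff]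
  constructor
  · rintro ⟨⟨huu, ⟨m, hm, hum⟩, -⟩, hmax⟩
    have hmu : m = u := hmax m ⟨hum, ⟨m, hm, hum⟩, hD hm (hrefl hum)⟩
    subst hmu
    exact ⟨⟨huu, hm, hm⟩, fun v ⟨huv, _, hv⟩ => hmax v ⟨huv, ⟨m, hm, hum⟩, hD hv (hrefl huv)⟩⟩
  · rintro ⟨⟨huu, hu, -⟩, hmax⟩
    refine ⟨⟨huu, hD hu huu, hD hu huu⟩, fun v ⟨huv, _, m, hm, hvm⟩ => ?_⟩
    have hmu : m = u := hmax m ⟨hR.2.2.2 u v m huv hvm, hu, hm⟩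
    subst hmu
    exact hR.2.2.1 v m hvm huv

lemma IsPor.dual (hR : IsPor W R) : IsPor W (dual R) :=
  ⟨fun _ hp => ⟨(hR.1 hp).2, (hR.1 hp).1⟩, hR.2.1,
    fun a b hab hba => hR.2.2.1 a b hba hab, fun a b c hab hbc => hR.2.2.2 c b a hbc hab⟩

end Por

section Tau

variable {W M L : Set α} {R : Set (α × α)} {a b : α}

lemma mem_tau : (a, b) ∈ tau L M R ↔
    ((b, a) ∈ R ∧ b ∈ L ∧ a ∈ L) ∨ ((a ∈ L ∧ b ∈ M) ∧ (a, b) ∉ R) ∨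
      ((b, a) ∈ R ∧ b ∈ M ∧ a ∈ M) :=
  or_assoc

lemma IsPor.tau (hR : IsPor W R) (hL : L ⊆ W) : IsPor W (tau L (W \ L) R) := by
  obtain ⟨hsub, hrefl, hanti, htrans⟩ := hR
  -- for transitivity: a cross pair composed with a dualized pair is a cross pair, since
  -- `(b, a) ∈ R` and `(a, c) ∈ R` would give `(b, c) ∈ R`
  refine ⟨fun ⟨a, b⟩ hab => ?_, fun x hx => ?_, fun a b hab hba => ?_, fun a b c hab hbc => ?_⟩ <;>
    simp only [mem_tau] at * <;> grind

lemma isLowerEnd_tau : IsLowerEnd (tau L (W \ L) R) L := by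
  intro a b hab hb
  rw [mem_tau] at hab
  grind

lemma tau_tau (hR : IsPor W R) (hlow : IsLowerEnd R L) :
    tau L (W \ L) (tau L (W \ L) R) = R := by
  ext ⟨a, b⟩
  have := @hR.1 (a, b)
  have := hlow a b
  simp only [mem_tau]
  grind

lemma restrict_tau (hM : M ⊆ W \ L) : restrict (tau L (W \ L) R) M = dual (restrict R M) := by
  ext ⟨a, b⟩
  have := @hM a
  have := @hM b
  simp only [restrict, dual, Set.mem_inter_iff, Set.mem_ofPred_eq, Set.mem_prod, mem_tau]
  grind

lemma upSet_tau (hR : IsPor W R) (hM : M ⊆ W \ L) :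
    upSet (tau L (W \ L) R) M = downSet R M \ L := by
  ext x
  simp only [upSet, downSet, Set.mem_ofPred_eq, Set.mem_sdiff, mem_tau]
  constructor
  · rintro ⟨m, hm, hmx⟩
    grind
  · rintro ⟨⟨m, hm, hxm⟩, hx⟩
    have := @hR.1 (x, m) hxm
    grind

lemma maxPts_tau_diff : maxPts (tau L (W \ L) R) \ L = maxOf (dual R) (W \ L) := by
  have hup : ∀ u ∉ L, up (tau L (W \ L) R) u = up (restrict (dual R) (W \ L)) u := by
    intro u hu
    ext v
    simp only [up, restrict, dual, Set.mem_ofPred_eq, Set.mem_inter_iff, Set.mem_prod, mem_tau]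
    grind
  ext u
  constructor
  · rintro ⟨hu, huL⟩
    exact (hup u huL).symm.trans hu
  · intro hu
    have huL : u ∉ L := (mem_maxPts_iff.1 hu).1.2.1.2
    exact ⟨(hup u huL).trans hu, huL⟩

end Tau

section AdjoinAbove

def adjoinAbove (y : α) (L : Set α) (R : Set (α × α)) : Set (α × α) :=
  R ∪ insert y L ×ˢ {y}

variable {W M L : Set α} {R S : Set (α × α)} {y : α}

lemma mem_adjoinAbove {a b : α} :
    (a, b) ∈ adjoinAbove y L R ↔ (a, b) ∈ R ∨ ((a = y ∨ a ∈ L) ∧ b = y) :=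
  Iff.rfl

lemma adjoinAbove_empty : adjoinAbove y ∅ R = R ∪ {(y, y)} := by
  simp [adjoinAbove]

lemma IsPor.adjoinAbove (hR : IsPor W R) (hy : y ∉ W) (hL : L ⊆ W) (hlow : IsLowerEnd R L) :
    IsPor (W ∪ {y}) (adjoinAbove y L R) := by
  obtain ⟨hsub, hrefl, hanti, htrans⟩ := hR
  have hlow' : ∀ a b, (a, b) ∈ R → b ∈ L → a ∈ L := hlow
  refine ⟨fun ⟨a, b⟩ hab => ?_, fun x hx => ?_, fun a b hab hba => ?_, fun a b c hab hbc => ?_⟩ <;>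
    simp only [mem_adjoinAbove, Set.mem_union, Set.mem_singleton_iff] at * <;> grind

lemma restrict_adjoinAbove (hR : R ⊆ W ×ˢ W) (hy : y ∉ W) (hML : Disjoint M L) :
    restrict (adjoinAbove y L R) (M ∪ {y}) = restrict R M ∪ {(y, y)} := by
  ext ⟨a, b⟩
  have := @hR (a, b)
  have : a ∈ M → a ∉ L := fun ha => Set.disjoint_left.1 hML ha
  simp only [restrict, Set.mem_inter_iff, mem_adjoinAbove, Set.mem_union, Set.mem_prod,
    Set.mem_singleton_iff, Prod.mk.injEq] at *
  grind

lemma restrict_adjoinAbove_self (hR : R ⊆ W ×ˢ W) (hy : y ∉ W) :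
    restrict (adjoinAbove y L R) W = R := by
  ext ⟨a, b⟩
  have := @hR (a, b)
  simp only [restrict, Set.mem_inter_iff, mem_adjoinAbove, Set.mem_prod] at *
  grind

lemma down_adjoinAbove (hR : R ⊆ W ×ˢ W) (hy : y ∉ W) (hL : L ⊆ W) :
    down (adjoinAbove y L R) y \ {y} = L := by
  ext a
  have := @hR (a, y)
  have := @hL a
  simp only [down, Set.mem_sdiff, Set.mem_ofPred_eq, mem_adjoinAbove, Set.mem_prod,
    Set.mem_singleton_iff] at *
  grind

lemma maxPts_adjoinAbove (hR : R ⊆ W ×ˢ W) (hy : y ∉ W) :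
    maxPts (adjoinAbove y L R) = insert y (maxPts R \ L) := by
  ext u
  have := fun v => @hR (u, v)
  have := fun v => @hR (v, u)
  simp only [Set.mem_insert_iff, Set.mem_sdiff, mem_maxPts_iff, mem_adjoinAbove, Set.mem_prod]
    at *
  grind

lemma adjoinAbove_down_restrict (hS : IsPor (W ∪ {y}) S) (hy : y ∈ maxPts S) :
    adjoinAbove y (down S y \ {y}) (restrict S W) = S := by
  ext ⟨a, b⟩
  have := @hS.1 (a, b)
  have := hS.2.1 y
  rw [mem_maxPts_iff] at hy
  have := hy.2 b
  simp only [down, restrict, Set.mem_inter_iff, Set.mem_sdiff, Set.mem_ofPred_eq,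
    mem_adjoinAbove, Set.mem_prod, Set.mem_union, Set.mem_singleton_iff] at *
  grind

lemma IsPor.isLowerEnd_down_restrict (hS : IsPor (W ∪ {y}) S) (hy : y ∉ W) :
    IsLowerEnd (restrict S W) (down S y \ {y}) := by
  rintro a b ⟨hab, ha, -⟩ ⟨hby, -⟩
  exact ⟨hS.2.2.2 a b y hab hby, fun hay => hy (hay ▸ ha)⟩

lemma maxPts_union_singleton {Z : Set α} {Q : Set (α × α)} (hQ : Q ⊆ Z ×ˢ Z)
    (hy : y ∉ Z) : maxPts (Q ∪ {(y, y)}) = insert y (maxPts Q) := by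
  rw [← adjoinAbove_empty, maxPts_adjoinAbove hQ hy, Set.sdiff_empty]

end AdjoinAbove

section Correspondence

variable {X Z L W : Set α} {Q R S P : Set (α × α)} {y : α}

lemma subset_union_sdiff (hXZ : Disjoint X Z) (hLX : L ⊆ X) : Z ⊆ (X ∪ Z) \ L :=
  fun _ hz => ⟨Or.inr hz, fun hzL => Set.disjoint_left.1 hXZ (hLX hzL) hz⟩

lemma IsPor.isLowerEnd_sdiff_upSet (hP : IsPor (X ∪ Z) P) :
    IsLowerEnd P (X \ upSet P Z) := by
  rintro a b hab ⟨-, hbU⟩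
  refine ⟨?_, fun ⟨z, hz, hza⟩ => hbU ⟨z, hz, hP.2.2.2 z a b hza hab⟩⟩
  rcases (hP.1 hab).1 with haX | haZ
  · exact haX
  · exact absurd ⟨a, haZ, hab⟩ hbU

lemma mem_nstarSet_iff (hXZ : Disjoint X Z) (hQ : Q ⊆ Z ×ˢ Z) (hy : y ∉ X ∪ Z) :
    S ∈ NstarSet (Q ∪ {(y, y)}) X (Z ∪ {y}) ↔ ∃ R L, IsPor (X ∪ Z) R ∧ L ⊆ X ∧
      IsLowerEnd R L ∧ restrict R Z = Q ∧ maxPts R \ L = maxPts Q ∧ S = adjoinAbove y L R := by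
  have hyZ : y ∉ Z := fun h => hy (Or.inr h)
  constructor
  · rintro ⟨⟨hSpor, hSres⟩, hSmax⟩
    rw [← Set.union_assoc] at hSpor
    have hymax : y ∈ maxPts S := by
      rw [← hSmax, maxPts_union_singleton hQ hyZ]
      exact Set.mem_insert y _
    have hSeq := (adjoinAbove_down_restrict hSpor hymax).symm
    refine ⟨restrict S (X ∪ Z), down S y \ {y}, hSpor.isPor_restrict Set.subset_union_left,
      ?_, hSpor.isLowerEnd_down_restrict hy, ?_, ?_, hSeq⟩
    · rintro u ⟨huy : (u, y) ∈ S, hu⟩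
      rcases (hSpor.1 huy).1 with (huX | huZ) | huy'
      · exact huX
      · have : (u, y) ∈ Q ∪ {(y, y)} := hSres ▸ ⟨huy, Or.inl huZ, Or.inr rfl⟩
        rcases this with hQuy | huy'
        · exact absurd (hQ hQuy).2 hyZ
        · exact absurd (Prod.ext_iff.1 huy').1 hu
      · exact absurd huy' hu
    · rw [restrict_restrict Set.subset_union_right, ← restrict_restrict (N := Z ∪ {y})
        Set.subset_union_left, hSres, ← adjoinAbove_empty, restrict_adjoinAbove_self hQ hyZ]
    · have hR : IsPor (X ∪ Z) (restrict S (X ∪ Z)) := hSpor.isPor_restrict Set.subset_union_left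
      have hyR : y ∉ maxPts (restrict S (X ∪ Z)) \ (down S y \ {y}) :=
        fun h => hy (maxPts_subset hR.1 h.1)
      have hyQ : y ∉ maxPts Q := fun h => hyZ (maxPts_subset hQ h)
      rw [← Set.insert_sdiff_self_of_notMem hyR, ← Set.insert_sdiff_self_of_notMem hyQ,
        ← maxPts_adjoinAbove hR.1 hy, ← hSeq, ← hSmax, maxPts_union_singleton hQ hyZ]
  · rintro ⟨R, L, hR, hLX, hlow, hRZ, hmax, rfl⟩
    refine ⟨⟨?_, ?_⟩, ?_⟩
    · rw [← Set.union_assoc]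
      exact hR.adjoinAbove hy (hLX.trans Set.subset_union_left) hlow
    · rw [restrict_adjoinAbove hR.1 hy (hXZ.symm.mono_right hLX), hRZ]
    · rw [maxPts_union_singleton hQ hyZ, maxPts_adjoinAbove hR.1 hy, hmax]

def toIset (W : Set α) (y : α) (S : Set (α × α)) : Set (α × α) :=
  tau (down S y \ {y}) (W \ (down S y \ {y})) (restrict S W)

def toNstar (X Z : Set α) (y : α) (P : Set (α × α)) : Set (α × α) :=
  adjoinAbove y (X \ upSet P Z) (tau (X \ upSet P Z) ((X ∪ Z) \ (X \ upSet P Z)) P)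

lemma toIset_adjoinAbove (hR : R ⊆ W ×ˢ W) (hy : y ∉ W) (hL : L ⊆ W) :
    toIset W y (adjoinAbove y L R) = tau L (W \ L) R := by
  rw [toIset, down_adjoinAbove hR hy hL, restrict_adjoinAbove_self hR hy]

lemma sdiff_upSet_tau (hW : (X ∪ Z).Finite) (hXZ : Disjoint X Z) (hR : IsPor (X ∪ Z) R)
    (hLX : L ⊆ X) (hlow : IsLowerEnd R L) (hmax : maxPts R \ L ⊆ Z) :
    X \ upSet (tau L ((X ∪ Z) \ L) R) Z = L := by
  rw [upSet_tau hR (subset_union_sdiff hXZ hLX)]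
  ext u
  refine ⟨fun ⟨huX, hu⟩ => ?_, fun hu => ⟨hLX hu, fun h => h.2 hu⟩⟩
  by_contra huL
  obtain ⟨m, hm, hum⟩ := hR.exists_rel_mem_maxPts hW (Or.inl huX)
  have hmL : m ∉ L := fun hmL => huL (hlow u m hum hmL)
  exact hu ⟨⟨m, hmax ⟨hm, hmL⟩, hum⟩, huL⟩

lemma maxPts_tau_sdiff_upSet (hP : P ∈ Iset (dual Q) X Z) :
    maxPts (tau (X \ upSet P Z) ((X ∪ Z) \ (X \ upSet P Z)) P) \ (X \ upSet P Z) =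
      maxPts Q := by
  have hW : (X ∪ Z) \ (X \ upSet P Z) = downSet (dual P) Z := by
    ext x
    constructor
    · rintro ⟨hx | hx, hxL⟩
      · exact not_not.1 fun h => hxL ⟨hx, h⟩
      · exact ⟨x, hx, hP.1.2.1 x (Or.inr hx)⟩
    · rintro ⟨z, hz, hzx⟩
      exact ⟨(hP.1.1 hzx).2, fun h => h.2 ⟨z, hz, hzx⟩⟩
  rw [maxPts_tau_diff, hW, hP.1.dual.maxOf_downSet, maxOf, ← dual_restrict, hP.2]
  rfl

lemma toIset_mem (hXZ : Disjoint X Z) (hQ : Q ⊆ Z ×ˢ Z) (hy : y ∉ X ∪ Z)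
    (hS : S ∈ NstarSet (Q ∪ {(y, y)}) X (Z ∪ {y})) : toIset (X ∪ Z) y S ∈ Iset (dual Q) X Z := by
  obtain ⟨R, L, hR, hLX, -, hRZ, -, rfl⟩ := (mem_nstarSet_iff hXZ hQ hy).1 hS
  have hLW : L ⊆ X ∪ Z := hLX.trans Set.subset_union_left
  rw [toIset_adjoinAbove hR.1 hy hLW]
  exact ⟨hR.tau hLW, by rw [restrict_tau (subset_union_sdiff hXZ hLX), hRZ]⟩

lemma toNstar_mem (hXZ : Disjoint X Z) (hQ : Q ⊆ Z ×ˢ Z) (hy : y ∉ X ∪ Z)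
    (hP : P ∈ Iset (dual Q) X Z) : toNstar X Z y P ∈ NstarSet (Q ∪ {(y, y)}) X (Z ∪ {y}) := by
  have hLX : X \ upSet P Z ⊆ X := Set.sdiff_subset
  refine (mem_nstarSet_iff hXZ hQ hy).2 ⟨_, _, hP.1.tau (hLX.trans Set.subset_union_left), hLX,
    isLowerEnd_tau, ?_, maxPts_tau_sdiff_upSet hP, rfl⟩
  rw [restrict_tau (subset_union_sdiff hXZ hLX), hP.2]
  rfl

lemma toIset_toNstar (hy : y ∉ X ∪ Z) (hP : P ∈ Iset (dual Q) X Z) :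
    toIset (X ∪ Z) y (toNstar X Z y P) = P := by
  have hLW : X \ upSet P Z ⊆ X ∪ Z := Set.sdiff_subset.trans Set.subset_union_left
  rw [toNstar, toIset_adjoinAbove (hP.1.tau hLW).1 hy hLW,
    tau_tau hP.1 hP.1.isLowerEnd_sdiff_upSet]

lemma toNstar_toIset (hW : (X ∪ Z).Finite) (hXZ : Disjoint X Z) (hQ : Q ⊆ Z ×ˢ Z)
    (hy : y ∉ X ∪ Z) (hS : S ∈ NstarSet (Q ∪ {(y, y)}) X (Z ∪ {y})) :
    toNstar X Z y (toIset (X ∪ Z) y S) = S := by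
  obtain ⟨R, L, hR, hLX, hlow, -, hmax, rfl⟩ := (mem_nstarSet_iff hXZ hQ hy).1 hS
  have hmaxZ : maxPts R \ L ⊆ Z := hmax ▸ maxPts_subset hQ
  rw [toIset_adjoinAbove hR.1 hy (hLX.trans Set.subset_union_left), toNstar,
    sdiff_upSet_tau hW hXZ hR hLX hlow hmaxZ, tau_tau hR hlow]

end Correspondence

/-- `# 𝔑*_{Q+A_y}(X, Z ∪ {y}) = # ℑ_{Q^d}(X, Z)`. -/
theorem stmt0 {α : Type*} (X Z : Set α) (hX : X.Finite) (hZ : Z.Finite)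
    (hXZ : Disjoint X Z) (Q : Set (α × α)) (hQ : IsPor Z Q)
    (y : α) (hy : y ∉ X ∪ Z) :
    (NstarSet (Q ∪ {(y, y)}) X (Z ∪ {y})).ncard = (Iset (dual Q) X Z).ncard := by
  have hinv : Set.InvOn (toNstar X Z y) (toIset (X ∪ Z) y) (NstarSet (Q ∪ {(y, y)}) X (Z ∪ {y}))
      (Iset (dual Q) X Z) :=
    ⟨fun _ hS => toNstar_toIset (hX.union hZ) hXZ hQ.1 hy hS, fun _ hP => toIset_toNstar hy hP⟩
  exact (hinv.bijOn (fun _ hS => toIset_mem hXZ hQ.1 hy hS)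
    (fun _ hP => toNstar_mem hXZ hQ.1 hy hP)).ncard_eq

end Erne
end

section
/- Let X, Y be finite disjoint sets and Q ∈ 𝔓(Y). For every P ∈ 𝔓(X) and every f ∈ ℋ_Q(Y, ℒ(P)), the relation Φ(f) = P ∪ Q ∪ ⋃_{y∈Y} (f(y) × {y}) is a partial order relation on X ∪ Y in which Y is an upper end and Φ(f)|_Y = Q; in particular Φ(f) ∈ 𝔐_Q(X,Y). -/
namespace Erne

variable {α : Type*}

/-!
Since `X` and `Y` are disjoint, a pair of `Φ(f)` starting in `Y` lies in `Q`, a pair ending in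
`X` lies in `P`, and a pair from `X` to `y ∈ Y` is one with first component in `f y`. Splitting
`(x, y), (y, z) ∈ Φ(f)` by where the middle point `y` lies, transitivity comes from that of `P`
and `Q`, from `f z` being a lower end of `P`, and from the monotonicity of `f`. `Y` is an upper
end, hence convex.
-/

theorem IsUpperEnd.isConvex {R : Set (α × α)} {U : Set α} (h : IsUpperEnd R U) :
    IsConvex R U :=
  fun a _ x ha _ hax _ => h a x hax ha

section Phi

variable {X Y : Set α} {P Q : Set (α × α)} {f : ↥Y → Set α} {a b : α}

theorem subset_of_mem_Hset (hP : P ⊆ X ×ˢ X) (hf : f ∈ Hset Q P Y) (y : ↥Y) :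
    f y ⊆ X :=
  fun _ hx => (hP ((hf.1 y).1 hx)).1

theorem mem_Phi :
    (a, b) ∈ Phi Q Y P f ↔ (a, b) ∈ P ∨ (a, b) ∈ Q ∨ ∃ h : b ∈ Y, a ∈ f ⟨b, h⟩ := by
  simp only [Phi, Set.mem_union, Set.mem_ofPred_eq, or_assoc]

theorem Phi_subset (hP : P ⊆ X ×ˢ X) (hQ : Q ⊆ Y ×ˢ Y) (hf : ∀ y, f y ⊆ X) :
    Phi Q Y P f ⊆ (X ∪ Y) ×ˢ (X ∪ Y) := by
  rintro ⟨a, b⟩ hab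
  rcases mem_Phi.mp hab with h | h | ⟨hb, ha⟩
  · exact ⟨.inl (hP h).1, .inl (hP h).2⟩
  · exact ⟨.inr (hQ h).1, .inr (hQ h).2⟩
  · exact ⟨.inl (hf _ ha), .inr hb⟩

theorem mem_Phi_iff_of_fst_mem (hXY : Disjoint X Y) (hP : P ⊆ X ×ˢ X) (hf : ∀ y, f y ⊆ X)
    (ha : a ∈ Y) : (a, b) ∈ Phi Q Y P f ↔ (a, b) ∈ Q := by
  refine ⟨fun hab => ?_, fun hab => mem_Phi.mpr (.inr (.inl hab))⟩
  rcases mem_Phi.mp hab with h | h | ⟨_, haf⟩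
  · exact absurd ha (hXY.notMem_of_mem_left (hP h).1)
  · exact h
  · exact absurd ha (hXY.notMem_of_mem_left (hf _ haf))

theorem mem_Phi_iff_of_snd_mem (hXY : Disjoint X Y) (hQ : Q ⊆ Y ×ˢ Y) (hb : b ∈ X) :
    (a, b) ∈ Phi Q Y P f ↔ (a, b) ∈ P := by
  refine ⟨fun hab => ?_, fun hab => mem_Phi.mpr (.inl hab)⟩
  rcases mem_Phi.mp hab with h | h | ⟨hbY, _⟩
  · exact h
  · exact absurd (hQ h).2 (hXY.notMem_of_mem_left hb)
  · exact absurd hbY (hXY.notMem_of_mem_left hb)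

theorem mem_Phi_iff_of_fst_mem_of_snd_mem (hXY : Disjoint X Y) (hP : P ⊆ X ×ˢ X)
    (hQ : Q ⊆ Y ×ˢ Y) (ha : a ∈ X) (hb : b ∈ Y) :
    (a, b) ∈ Phi Q Y P f ↔ a ∈ f ⟨b, hb⟩ := by
  refine ⟨fun hab => ?_, fun haf => mem_Phi.mpr (.inr (.inr ⟨hb, haf⟩))⟩
  rcases mem_Phi.mp hab with h | h | ⟨_, haf⟩
  · exact absurd hb (hXY.notMem_of_mem_left (hP h).2)
  · exact absurd (hQ h).1 (hXY.notMem_of_mem_left ha)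
  · exact haf

theorem isUpperEnd_Phi (hXY : Disjoint X Y) (hP : P ⊆ X ×ˢ X) (hQ : Q ⊆ Y ×ˢ Y)
    (hf : ∀ y, f y ⊆ X) : IsUpperEnd (Phi Q Y P f) Y :=
  fun _ _ hab ha => (hQ ((mem_Phi_iff_of_fst_mem hXY hP hf ha).mp hab)).2

theorem restrict_Phi (hXY : Disjoint X Y) (hP : P ⊆ X ×ˢ X) (hQ : Q ⊆ Y ×ˢ Y)
    (hf : ∀ y, f y ⊆ X) : restrict (Phi Q Y P f) Y = Q := by
  ext ⟨a, b⟩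
  refine ⟨fun ⟨hab, ha, _⟩ => (mem_Phi_iff_of_fst_mem hXY hP hf ha).mp hab,
    fun hab => ⟨mem_Phi.mpr (.inr (.inl hab)), hQ hab⟩⟩

theorem Phi_antisymm (hXY : Disjoint X Y) (hP : IsPor X P) (hQ : IsPor Y Q)
    (hf : ∀ y, f y ⊆ X) {x y : α} (hxy : (x, y) ∈ Phi Q Y P f) (hyx : (y, x) ∈ Phi Q Y P f) :
    x = y := by
  rcases (Phi_subset hP.1 hQ.1 hf hxy).1 with hx | hx
  · have hyx : (y, x) ∈ P := (mem_Phi_iff_of_snd_mem hXY hQ.1 hx).mp hyx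
    have hxy : (x, y) ∈ P := (mem_Phi_iff_of_snd_mem hXY hQ.1 (hP.1 hyx).1).mp hxy
    exact hP.2.2.1 x y hxy hyx
  · have hxy : (x, y) ∈ Q := (mem_Phi_iff_of_fst_mem hXY hP.1 hf hx).mp hxy
    have hyx : (y, x) ∈ Q := (mem_Phi_iff_of_fst_mem hXY hP.1 hf (hQ.1 hxy).2).mp hyx
    exact hQ.2.2.1 x y hxy hyx

theorem Phi_trans (hXY : Disjoint X Y) (hP : IsPor X P) (hQ : IsPor Y Q) (hf : f ∈ Hset Q P Y)
    {x y z : α} (hxy : (x, y) ∈ Phi Q Y P f) (hyz : (y, z) ∈ Phi Q Y P f) :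
    (x, z) ∈ Phi Q Y P f := by
  have hfX : ∀ y, f y ⊆ X := subset_of_mem_Hset hP.1 hf
  have hsub := Phi_subset hP.1 hQ.1 hfX
  rcases (hsub hxy).2 with hy | hy
  · have hxy : (x, y) ∈ P := (mem_Phi_iff_of_snd_mem hXY hQ.1 hy).mp hxy
    rcases (hsub hyz).2 with hz | hz
    · have hyz : (y, z) ∈ P := (mem_Phi_iff_of_snd_mem hXY hQ.1 hz).mp hyz
      exact mem_Phi.mpr (.inl (hP.2.2.2 x y z hxy hyz))
    · have hyz : y ∈ f ⟨z, hz⟩ :=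
        (mem_Phi_iff_of_fst_mem_of_snd_mem hXY hP.1 hQ.1 hy hz).mp hyz
      exact mem_Phi.mpr (.inr (.inr ⟨hz, (hf.1 _).2 x y hxy hyz⟩))
  · have hyz : (y, z) ∈ Q := (mem_Phi_iff_of_fst_mem hXY hP.1 hfX hy).mp hyz
    rcases (hsub hxy).1 with hx | hx
    · have hxy : x ∈ f ⟨y, hy⟩ :=
        (mem_Phi_iff_of_fst_mem_of_snd_mem hXY hP.1 hQ.1 hx hy).mp hxy
      exact mem_Phi.mpr (.inr (.inr ⟨(hQ.1 hyz).2, hf.2 ⟨y, hy⟩ ⟨z, _⟩ hyz hxy⟩))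
    · have hxy : (x, y) ∈ Q := (mem_Phi_iff_of_fst_mem hXY hP.1 hfX hx).mp hxy
      exact mem_Phi.mpr (.inr (.inl (hQ.2.2.2 x y z hxy hyz)))

theorem isPor_Phi (hXY : Disjoint X Y) (hP : IsPor X P) (hQ : IsPor Y Q)
    (hf : f ∈ Hset Q P Y) : IsPor (X ∪ Y) (Phi Q Y P f) := by
  have hfX : ∀ y, f y ⊆ X := subset_of_mem_Hset hP.1 hf
  refine ⟨Phi_subset hP.1 hQ.1 hfX, ?_, fun _ _ => Phi_antisymm hXY hP hQ hfX,
    fun _ _ _ => Phi_trans hXY hP hQ hf⟩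
  rintro x (hx | hx)
  · exact mem_Phi.mpr (.inl (hP.2.1 x hx))
  · exact mem_Phi.mpr (.inr (.inl (hQ.2.1 x hx)))

end Phi

theorem stmt5_general {α : Type*} (X Y : Set α)
    (hXY : Disjoint X Y) (Q : Set (α × α)) (hQ : IsPor Y Q)
    (P : Set (α × α)) (hP : IsPor X P) (f : ↥Y → Set α) (hf : f ∈ Hset Q P Y) :
    IsPor (X ∪ Y) (Phi Q Y P f) ∧ IsUpperEnd (Phi Q Y P f) Y ∧
      restrict (Phi Q Y P f) Y = Q ∧ Phi Q Y P f ∈ Mset Q X Y := by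
  have hfX : ∀ y, f y ⊆ X := subset_of_mem_Hset hP.1 hf
  have hpor := isPor_Phi hXY hP hQ hf
  have hup := isUpperEnd_Phi hXY hP.1 hQ.1 hfX
  have hres := restrict_Phi hXY hP.1 hQ.1 hfX
  exact ⟨hpor, hup, hres, ⟨hpor, hup⟩, hpor, hres, hup.isConvex⟩

/-- For `P ∈ 𝔓(X)` and `f ∈ ℋ_Q(Y, ℒ(P))`, the relation `Φ(f)`
is a p.o.r. on `X ∪ Y` in which `Y` is an upper end and `Φ(f)|_Y = Q`;
in particular `Φ(f) ∈ 𝔐_Q(X,Y)`. -/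
theorem stmt5 {α : Type*} (X Y : Set α) (hX : X.Finite) (hY : Y.Finite)
    (hXY : Disjoint X Y) (Q : Set (α × α)) (hQ : IsPor Y Q)
    (P : Set (α × α)) (hP : IsPor X P) (f : ↥Y → Set α) (hf : f ∈ Hset Q P Y) :
    IsPor (X ∪ Y) (Phi Q Y P f) ∧ IsUpperEnd (Phi Q Y P f) Y ∧
      restrict (Phi Q Y P f) Y = Q ∧ Phi Q Y P f ∈ Mset Q X Y :=
  stmt5_general X Y hXY Q hQ P hP f hf

end Erne
end

section
/- Let X, Y be finite disjoint sets, Z ⊆ Y, Q ∈ 𝔓(Z), and let R ∈ 𝔘(X,Y) ∩ ℭ_Q(X ∪ (Y\Z), Z). If Y ⊆ ↓_R Z, then R ∈ 𝔐_Q(X ∪ (Y\Z), Z), i.e., Z is additionally an upper end of R. -/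
namespace Erne

variable {α : Type*}

theorem IsUpperEnd.upSet_subset {R : Set (α × α)} {Y Z : Set α} (hY : IsUpperEnd R Y)
    (hZY : Z ⊆ Y) : upSet R Z ⊆ Y :=
  fun _ ⟨z, hz, hzx⟩ => hY z _ hzx (hZY hz)

theorem IsConvex.isUpperEnd {R : Set (α × α)} {Z : Set α} (hZ : IsConvex R Z)
    (hup : upSet R Z ⊆ downSet R Z) : IsUpperEnd R Z := by
  intro x y hxy hx
  obtain ⟨z, hz, hyz⟩ := hup ⟨x, hx, hxy⟩
  exact hZ x z y hx hz hxy hyz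

theorem stmt8_general {α : Type*} (X Y : Set α) (Z : Set α) (hZY : Z ⊆ Y)
    (Q : Set (α × α)) (R : Set (α × α))
    (hR : R ∈ Uset X Y ∩ Cset Q (X ∪ (Y \ Z)) Z) (h : Y ⊆ downSet R Z) :
    R ∈ Mset Q (X ∪ (Y \ Z)) Z := by
  obtain ⟨⟨-, hYup⟩, hC⟩ := hR
  exact ⟨⟨hC.1, hC.2.2.isUpperEnd ((hYup.upSet_subset hZY).trans h)⟩, hC⟩

/-- If `R ∈ 𝔘(X,Y) ∩ ℭ_Q(X ∪ (Y\Z), Z)` and `Y ⊆ ↓_R Z`,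
then `R ∈ 𝔐_Q(X ∪ (Y\Z), Z)`. -/
theorem stmt8 {α : Type*} (X Y : Set α) (hX : X.Finite) (hY : Y.Finite)
    (hXY : Disjoint X Y) (Z : Set α) (hZY : Z ⊆ Y)
    (Q : Set (α × α)) (hQ : IsPor Z Q) (R : Set (α × α))
    (hR : R ∈ Uset X Y ∩ Cset Q (X ∪ (Y \ Z)) Z) (h : Y ⊆ downSet R Z) :
    R ∈ Mset Q (X ∪ (Y \ Z)) Z :=
  stmt8_general X Y Z hZY Q R hR h

end Erne
end

section
/- Let X, Y be finite disjoint sets and Q ∈ 𝔓(Y). The family of sets ℭ_G(X \ c(G), c(G)), indexed by G ∈ 𝔊_Q(X), forms a partition of ℑ_Q(X,Y): each such set is nonempty, every R ∈ ℑ_Q(X,Y) lies in exactly one of them (namely the one with G = R|_{γ_R(Y)}). -/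
namespace Erne

variable {α : Type*}

/-!
The convex hull `Γ = γ_R(Y)` is convex in `R`, and the hull of `Y` inside any convex superset
`C ⊇ Y` is the same as in `R`. Hence `R|_Γ ∈ 𝔊_Q(X)` and `R ∈ ℭ_{R|_Γ}(X \ Γ, Γ)`; conversely, if
`R ∈ ℭ_G(X \ c(G), c(G))` then `c(G) = γ_G(Y) = γ_R(Y)`, which forces `G = R|_Γ`. Each block
`ℭ_G(X \ c(G), c(G))` contains `G` extended by the identity on `X \ c(G)`.
-/

theorem IsPor.carrier_eq {X : Set α} {R : Set (α × α)} (h : IsPor X R) : carrier R = X :=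
  Set.ext fun x => ⟨fun hx => (h.1 hx).1, fun hx => h.2.1 x hx⟩

theorem IsPor.restrict {W Z : Set α} {R : Set (α × α)} (h : IsPor W R) (hZW : Z ⊆ W) :
    IsPor Z (restrict R Z) := by
  obtain ⟨-, hrefl, hanti, htrans⟩ := h
  exact ⟨Set.inter_subset_right, fun x hx => ⟨hrefl x (hZW hx), hx, hx⟩,
    fun x y hxy hyx => hanti x y hxy.1 hyx.1,
    fun x y z hxy hyz => ⟨htrans x y z hxy.1 hyz.1, hxy.2.1, hyz.2.2⟩⟩

theorem restrict_restrict_of_subset {R : Set (α × α)} {Y Z : Set α} (h : Y ⊆ Z) :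
    restrict (restrict R Z) Y = restrict R Y := by
  ext ⟨a, b⟩
  simp only [restrict, Set.mem_inter_iff, Set.mem_prod]
  tauto

theorem diff_union_eq_union {X Y C : Set α} (hYC : Y ⊆ C) (hC : C ⊆ X ∪ Y) :
    X \ C ∪ C = X ∪ Y := by
  rw [Set.sdiff_union_self]
  exact Set.Subset.antisymm (Set.union_subset Set.subset_union_left hC)
    (Set.union_subset_union_right X hYC)

section UnionDiag

variable {A C : Set α} {G : Set (α × α)}

theorem IsPor.union_diag (hG : IsPor C G) : IsPor (A ∪ C) (G ∪ diag A) := by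
  obtain ⟨hsub, hrefl, hanti, htrans⟩ := hG
  refine ⟨?_, ?_, ?_, ?_⟩
  · rintro ⟨a, b⟩ (h | ⟨hab, ha⟩)
    · exact ⟨Or.inr (hsub h).1, Or.inr (hsub h).2⟩
    · exact ⟨Or.inl ha, Or.inl (hab ▸ ha)⟩
  · rintro x (hx | hx)
    · exact Or.inr ⟨rfl, hx⟩
    · exact Or.inl (hrefl x hx)
  · rintro x y (hxy | hxy) (hyx | hyx)
    · exact hanti x y hxy hyx
    · exact hyx.1.symm
    · exact hxy.1
    · exact hxy.1
  · rintro x y z (hxy | hxy) (hyz | hyz)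
    · exact Or.inl (htrans x y z hxy hyz)
    · obtain rfl : y = z := hyz.1
      exact Or.inl hxy
    · obtain rfl : x = y := hxy.1
      exact Or.inl hyz
    · exact Or.inr ⟨hxy.1.trans hyz.1, hxy.2⟩

theorem restrict_union_diag (hG : G ⊆ C ×ˢ C) (hAC : Disjoint A C) :
    restrict (G ∪ diag A) C = G := by
  refine Set.Subset.antisymm ?_ fun p hp => ⟨Or.inl hp, hG hp⟩
  rintro p ⟨hp | hp, hpC⟩
  · exact hp
  · exact absurd hpC.1 (Set.disjoint_left.mp hAC hp.2)

theorem isConvex_union_diag (hG : G ⊆ C ×ˢ C) (hAC : Disjoint A C) :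
    IsConvex (G ∪ diag A) C := by
  rintro a - x ha - (hax | hax) -
  · exact (hG hax).2
  · exact absurd ha (Set.disjoint_left.mp hAC hax.2)

end UnionDiag

section Gamma

variable {R : Set (α × α)} {Y C : Set α}

theorem subset_gamma (hrefl : ∀ y ∈ Y, (y, y) ∈ R) : Y ⊆ gamma R Y :=
  fun y hy => ⟨y, hy, y, hy, hrefl y hy, hrefl y hy⟩

theorem gamma_subset {W : Set α} (hR : R ⊆ W ×ˢ W) : gamma R Y ⊆ W := by
  rintro x ⟨m, -, n, -, hmx, -⟩
  exact (hR hmx).2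

theorem isConvex_gamma (htrans : ∀ x y z, (x, y) ∈ R → (y, z) ∈ R → (x, z) ∈ R) :
    IsConvex R (gamma R Y) := by
  rintro a b x ⟨m, hm, -, -, hma, -⟩ ⟨-, -, n, hn, -, hbn⟩ hax hxb
  exact ⟨m, hm, n, hn, htrans m a x hma hax, htrans x b n hxb hbn⟩

theorem gamma_restrict_of_isConvex (hYC : Y ⊆ C) (hC : IsConvex R C) :
    gamma (restrict R C) Y = gamma R Y := by
  refine Set.Subset.antisymm ?_ ?_
  · rintro x ⟨m, hm, n, hn, hmx, hxn⟩
    exact ⟨m, hm, n, hn, hmx.1, hxn.1⟩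
  · rintro x ⟨m, hm, n, hn, hmx, hxn⟩
    have hx : x ∈ C := hC m n x (hYC hm) (hYC hn) hmx hxn
    exact ⟨m, hm, n, hn, ⟨hmx, hYC hm, hx⟩, ⟨hxn, hx, hYC hn⟩⟩

end Gamma

section Partition

variable {X Y : Set α} {Q R G : Set (α × α)}

theorem subset_gamma_of_mem_Iset (hR : R ∈ Iset Q X Y) : Y ⊆ gamma R Y :=
  subset_gamma fun y hy => hR.1.2.1 y (Or.inr hy)

theorem restrict_gamma_mem_Gset (hR : R ∈ Iset Q X Y) :
    restrict R (gamma R Y) ∈ Gset Q X Y := by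
  have hYΓ := subset_gamma_of_mem_Iset hR
  have hΓXY : gamma R Y ⊆ X ∪ Y := gamma_subset hR.1.1
  have hΓ : IsPor (gamma R Y) (restrict R (gamma R Y)) := hR.1.restrict hΓXY
  refine ⟨gamma R Y ∩ X, Set.inter_subset_right, ⟨?_, ?_⟩, ?_⟩
  · rwa [Set.inter_union_distrib_right, Set.union_eq_self_of_subset_right hYΓ,
      Set.inter_eq_left.mpr hΓXY]
  · rw [restrict_restrict_of_subset hYΓ, hR.2]
  · rw [hΓ.carrier_eq, gamma_restrict_of_isConvex hYΓ (isConvex_gamma hR.1.2.2.2)]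

theorem mem_Cset_restrict_gamma (hR : R ∈ Iset Q X Y) :
    R ∈ Cset (restrict R (gamma R Y)) (X \ gamma R Y) (gamma R Y) := by
  refine ⟨?_, rfl, isConvex_gamma hR.1.2.2.2⟩
  rw [diff_union_eq_union (subset_gamma_of_mem_Iset hR) (gamma_subset hR.1.1)]
  exact hR.1

theorem union_diag_mem_Cset (hG : IsPor (carrier G) G) :
    G ∪ diag (X \ carrier G) ∈ Cset G (X \ carrier G) (carrier G) := by
  have hdisj : Disjoint (X \ carrier G) (carrier G) := Set.disjoint_sdiff_left
  exact ⟨hG.union_diag, restrict_union_diag hG.1 hdisj, isConvex_union_diag hG.1 hdisj⟩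

theorem Cset_subset_Iset {M : Set α} (hMX : M ⊆ X) (hG : G ∈ Iset Q M Y) :
    Cset G (X \ carrier G) (carrier G) ⊆ Iset Q X Y := by
  rintro R ⟨hRpor, hRG, -⟩
  have hcarrier : carrier G = M ∪ Y := hG.1.carrier_eq
  have hYG : Y ⊆ carrier G := hcarrier ▸ Set.subset_union_right
  rw [diff_union_eq_union hYG (hcarrier ▸ Set.union_subset_union_left Y hMX)] at hRpor
  refine ⟨hRpor, ?_⟩
  rw [← restrict_restrict_of_subset hYG, hRG, hG.2]

theorem eq_restrict_gamma_of_mem_Cset (hYG : Y ⊆ carrier G) (hGγ : gamma G Y = carrier G)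
    (hR : R ∈ Cset G (X \ carrier G) (carrier G)) : G = restrict R (gamma R Y) := by
  obtain ⟨-, hRG, hconv⟩ := hR
  have hcarrier : carrier G = gamma R Y := by
    rw [← hGγ, ← hRG, gamma_restrict_of_isConvex hYG hconv]
  rw [← hRG, hcarrier]

end Partition

theorem stmt12_general {α : Type*} (X Y : Set α) (Q : Set (α × α)) :
    (∀ G ∈ Gset Q X Y, (Cset G (X \ carrier G) (carrier G)).Nonempty ∧
        Cset G (X \ carrier G) (carrier G) ⊆ Iset Q X Y) ∧
    ∀ R ∈ Iset Q X Y,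
      restrict R (gamma R Y) ∈ Gset Q X Y ∧
      R ∈ Cset (restrict R (gamma R Y)) (X \ gamma R Y) (gamma R Y) ∧
      ∀ G ∈ Gset Q X Y, R ∈ Cset G (X \ carrier G) (carrier G) →
        G = restrict R (gamma R Y) := by
  refine ⟨?_, fun R hR => ⟨restrict_gamma_mem_Gset hR, mem_Cset_restrict_gamma hR, ?_⟩⟩
  · rintro G ⟨M, hMX, hG, -⟩
    have hGpor : IsPor (carrier G) G := by rw [hG.1.carrier_eq]; exact hG.1
    exact ⟨⟨_, union_diag_mem_Cset hGpor⟩, Cset_subset_Iset hMX hG⟩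
  · rintro G ⟨M, -, hG, hGγ⟩
    exact eq_restrict_gamma_of_mem_Cset (hG.1.carrier_eq ▸ Set.subset_union_right) hGγ

/-- The sets `ℭ_G(X \ c(G), c(G))`, `G ∈ 𝔊_Q(X)`, form a
partition of `ℑ_Q(X,Y)`: each is a nonempty subset of `ℑ_Q(X,Y)`, and every
`R ∈ ℑ_Q(X,Y)` lies in exactly one of them, namely the one with `G = R|_{γ_R(Y)}`. -/
theorem stmt12 {α : Type*} (X Y : Set α) (hX : X.Finite) (hY : Y.Finite)
    (hXY : Disjoint X Y) (Q : Set (α × α)) (hQ : IsPor Y Q) :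
    (∀ G ∈ Gset Q X Y, (Cset G (X \ carrier G) (carrier G)).Nonempty ∧
        Cset G (X \ carrier G) (carrier G) ⊆ Iset Q X Y) ∧
    ∀ R ∈ Iset Q X Y,
      restrict R (gamma R Y) ∈ Gset Q X Y ∧
      R ∈ Cset (restrict R (gamma R Y)) (X \ gamma R Y) (gamma R Y) ∧
      ∀ G ∈ Gset Q X Y, R ∈ Cset G (X \ carrier G) (carrier G) →
        G = restrict R (gamma R Y) :=
  stmt12_general X Y Q

end Erne
end
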